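/- arXiv:0808.3194 — 3 statements merged into one kernel-verified Lean document; each statement's English description precedes it below -/
import Mathlib

section
/- There exist a constant C₂ > 0 and N₀ ∈ ℕ such that for all natural numbers N ≥ N₀, ∑_{j=0}^{N} ∑_{k=0}^{N} (2π)^{-1} ∫_ℝ |f̃_{j,k}(t)|² dt ≤ C₂ · N^{17/6}. (By the Plancherel theorem, (2π)^{-1} ∫ |f̃_{j,k}(t)|² dt is the squared L²(ℝ)-norm of the pattern function f_{j,k}.) -/
open MeasureTheory

/-- The generalized Laguerre polynomial `L_k^α(x) = ∑_{i=0}^{k} (-1)^i C(k+α, k-i) x^i / i!`. -/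
noncomputable def laguerre (k α : ℕ) (x : ℝ) : ℝ :=
  ∑ i ∈ Finset.range (k + 1),
    (-1 : ℝ) ^ i * (Nat.choose (k + α) (k - i)) * x ^ i / (Nat.factorial i)

/-- The Fourier transform `f̃_{j,k}` of the pattern function `f_{j,k}`: for `j ≥ k`,
`f̃_{j,k}(t) = π (-i)^{j-k} √(2^{k-j} k!/j!) |t|^{j-k} e^{-t²/4} L_k^{j-k}(t²/2)`,
and `f̃_{j,k} = f̃_{k,j}` for `j < k`. -/
noncomputable def patternFT (j k : ℕ) (t : ℝ) : ℂ :=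
  (Real.pi : ℂ) * (-Complex.I) ^ (max j k - min j k) *
    ((Real.sqrt ((Nat.factorial (min j k) : ℝ) /
        (2 ^ (max j k - min j k) * (Nat.factorial (max j k) : ℝ))) : ℝ) : ℂ) *
    ((|t| ^ (max j k - min j k) * Real.exp (-t ^ 2 / 4) *
        laguerre (min j k) (max j k - min j k) (t ^ 2 / 2) : ℝ) : ℂ)

/-!
Substituting `x = t²/2` turns `∫ |f̃_{k+d,k}|²` into
`π² √2 k!/(k+d)! · ∫₀^∞ x^{-1/2} · x^d e^{-x} L_k^d(x)² dx`. The moments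
`∫ x^{α+m} e^{-x} L_k^α` are Chu–Vandermonde sums and vanish for `m < k`, which gives the
normalisation `∫ x^α e^{-x} (L_k^α)² = (k+α)!/k!`. It remains to absorb the factor `x^{-1/2}`
at the cost of `√(k+d+1)`. For `d ≥ 1`, `x^{d-1/2}` is the geometric mean of `x^{d-1}` and
`x^d`, so Cauchy–Schwarz reduces to the normalisation for the weight `x^d` and to the weight
`x^{d-1}`, handled through `L_k^d = ∑_{i ≤ k} L_i^{d-1}`. For `d = 0` split at `x = 1/(k+1)`:
below it `|L_k(x)| ≤ (1+x)^k ≤ e`, above it `x^{-1/2} ≤ √(k+1)`. So every term of the double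
sum is `O(√N)`, and the sum is `O(N^{5/2})`.
-/

open Finset Real Set Polynomial
open scoped Nat

theorem Ring.choose_neg_one {R : Type*} [CommRing R] [BinomialRing R] (k : ℕ) :
    Ring.choose (-1 : R) k = (-1) ^ k := by
  rw [Ring.choose_neg, add_sub_cancel_left, Ring.choose_natCast, Nat.choose_self, Nat.cast_one,
    Units.smul_def, zsmul_one, Int.negOnePow_def]
  push_cast [zpow_natCast, Units.val_pow_eq_pow_val]
  rfl

theorem sum_neg_one_pow_mul_choose_mul_choose (a b k : ℕ) :
    ∑ r ∈ range (k + 1), (-1 : ℤ) ^ r * (a.choose (k - r)) * ((b + r).choose r)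
      = Ring.choose ((a : ℤ) - b - 1) k := by
  -- Chu–Vandermonde, after the upper negation `(-1)^r C(b+r, r) = C(-b-1, r)`.
  rw [show (a : ℤ) - b - 1 = -((b + 1 : ℕ) : ℤ) + a by push_cast; ring,
    Ring.add_choose_eq k (Commute.all _ _), Finset.Nat.sum_antidiagonal_eq_sum_range_succ
      (fun i j => Ring.choose (-((b + 1 : ℕ) : ℤ)) i * Ring.choose (a : ℤ) j)]
  refine Finset.sum_congr rfl fun r _ => ?_
  rw [Ring.choose_neg, Ring.choose_natCast,
    show ((b + 1 : ℕ) : ℤ) + r - 1 = ((b + r : ℕ) : ℤ) by push_cast; ring,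
    Ring.choose_natCast, Int.negOnePow_def, Units.smul_def]
  push_cast [zpow_natCast, Units.val_pow_eq_pow_val]
  ring

theorem integrableOn_rpow_mul_pow_mul_exp_neg {s : ℝ} (hs : -1 < s) (n : ℕ) :
    IntegrableOn (fun x => x ^ s * (x ^ n * exp (-x))) (Ioi 0) := by
  refine (integrableOn_rpow_mul_exp_neg_rpow (p := 1) (by linarith : -1 < s + n) one_pos).congr_fun
    (fun x (hx : 0 < x) => ?_) measurableSet_Ioi
  dsimp only
  rw [rpow_one, rpow_add hx, rpow_natCast, mul_assoc]

theorem integrableOn_pow_mul_exp_neg (n : ℕ) :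
    IntegrableOn (fun x => x ^ n * exp (-x)) (Ioi 0) := by
  simpa using integrableOn_rpow_mul_pow_mul_exp_neg (s := 0) (by norm_num) n

theorem integral_pow_mul_exp_neg (n : ℕ) : ∫ x in Ioi 0, x ^ n * exp (-x) = n ! := by
  rw [← Gamma_nat_eq_factorial, Gamma_eq_integral (by positivity)]
  refine setIntegral_congr_fun measurableSet_Ioi fun x _ => ?_
  rw [add_sub_cancel_right, rpow_natCast, mul_comm]

theorem integrableOn_rpow_mul_eval_mul_exp_neg {s : ℝ} (hs : -1 < s) (P : ℝ[X]) :
    IntegrableOn (fun x => x ^ s * (P.eval x * exp (-x))) (Ioi 0) := by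
  simp_rw [eval_eq_sum_range, Finset.sum_mul, Finset.mul_sum, mul_assoc]
  exact integrable_finsetSum _ fun i _ =>
    IntegrableOn.congr_fun ((integrableOn_rpow_mul_pow_mul_exp_neg hs i).const_mul (P.coeff i))
      (fun x _ => by ring) measurableSet_Ioi

theorem laguerre_eq_sum (k α : ℕ) (x : ℝ) :
    laguerre k α x = ∑ i ∈ range (k + 1), (-1) ^ i * (k + α).choose (k - i) / i ! * x ^ i :=
  Finset.sum_congr rfl fun i _ => by ring

noncomputable def laguerrePoly (k α : ℕ) : ℝ[X] :=
  ∑ i ∈ range (k + 1), C ((-1) ^ i * (k + α).choose (k - i) / i ! : ℝ) * X ^ i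

theorem eval_laguerrePoly (k α : ℕ) (x : ℝ) :
    (laguerrePoly k α).eval x = laguerre k α x := by
  simp [laguerrePoly, laguerre_eq_sum, eval_finsetSum]

theorem integrableOn_rpow_mul_laguerre_pow {s : ℝ} (hs : -1 < s) (p n k α : ℕ) :
    IntegrableOn (fun x => x ^ s * (x ^ p * exp (-x) * laguerre k α x ^ n)) (Ioi 0) :=
  (integrableOn_rpow_mul_eval_mul_exp_neg hs (X ^ p * laguerrePoly k α ^ n)).congr_fun
    (fun x _ => by simp only [eval_mul, eval_pow, eval_X, eval_laguerrePoly]; ring)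
    measurableSet_Ioi

theorem integrableOn_laguerre_pow (p n k α : ℕ) :
    IntegrableOn (fun x => x ^ p * exp (-x) * laguerre k α x ^ n) (Ioi 0) := by
  simpa using integrableOn_rpow_mul_laguerre_pow (s := 0) (by norm_num) p n k α

theorem integral_pow_mul_exp_neg_mul_laguerre (k α m : ℕ) :
    ∫ x in Ioi 0, x ^ (α + m) * exp (-x) * laguerre k α x
      = (α + m)! * (Ring.choose ((k : ℤ) - m - 1) k : ℤ) := by
  have hterm : ∀ i ∈ range (k + 1), ∫ x in Ioi 0,
      (-1) ^ i * (k + α).choose (k - i) / i ! * (x ^ (α + m + i) * exp (-x))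
      = (α + m)! * ((-1) ^ i * (k + α).choose (k - i) * (α + m + i).choose i : ℝ) := by
    intro i _
    rw [integral_const_mul, integral_pow_mul_exp_neg,
      ← Nat.add_choose_mul_factorial_mul_factorial (α + m) i]
    push_cast
    field_simp
  calc ∫ x in Ioi 0, x ^ (α + m) * exp (-x) * laguerre k α x
      = ∫ x in Ioi 0, ∑ i ∈ range (k + 1),
          (-1) ^ i * (k + α).choose (k - i) / i ! * (x ^ (α + m + i) * exp (-x)) := by
        simp_rw [laguerre_eq_sum, Finset.mul_sum]
        refine setIntegral_congr_fun measurableSet_Ioi fun x _ => sum_congr rfl fun i _ => ?_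
        ring
    _ = (α + m)! * (∑ i ∈ range (k + 1),
          (-1 : ℤ) ^ i * (k + α).choose (k - i) * (α + m + i).choose i : ℤ) := by
        rw [integral_finsetSum _ fun i _ => (integrableOn_pow_mul_exp_neg _).const_mul _,
          sum_congr rfl hterm, ← Finset.mul_sum]
        push_cast
        rfl
    _ = (α + m)! * (Ring.choose ((k : ℤ) - m - 1) k : ℤ) := by
        rw [sum_neg_one_pow_mul_choose_mul_choose]
        push_cast
        ring_nf

theorem integral_pow_mul_exp_neg_mul_laguerre_of_lt {k m : ℕ} (α : ℕ) (hm : m < k) :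
    ∫ x in Ioi 0, x ^ (α + m) * exp (-x) * laguerre k α x = 0 := by
  rw [integral_pow_mul_exp_neg_mul_laguerre,
    show (k : ℤ) - m - 1 = ((k - m - 1 : ℕ) : ℤ) by omega,
    Ring.choose_natCast, Nat.choose_eq_zero_of_lt (by omega)]
  simp

theorem integral_pow_mul_exp_neg_mul_laguerre_self (k α : ℕ) :
    ∫ x in Ioi 0, x ^ (α + k) * exp (-x) * laguerre k α x = (-1) ^ k * (α + k)! := by
  rw [integral_pow_mul_exp_neg_mul_laguerre, show (k : ℤ) - k - 1 = -1 by ring,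
    Ring.choose_neg_one]
  push_cast
  ring

theorem integral_laguerre_sq (k α : ℕ) :
    ∫ x in Ioi 0, x ^ α * exp (-x) * laguerre k α x ^ 2 = (k + α)! / k ! := by
  -- Expand one factor `L_k^α` in monomials `x^s`; only `s = k` has a nonzero moment.
  have hmoment : ∀ s ∈ range (k + 1), ∫ x in Ioi 0,
      (-1) ^ s * (k + α).choose (k - s) / s ! * (x ^ (α + s) * exp (-x) * laguerre k α x)
      = if s = k then ((k + α)! / k ! : ℝ) else 0 := by
    intro s hs
    rw [integral_const_mul]
    split_ifs with hsk
    · have hsq : ((-1 : ℝ) ^ k) ^ 2 = 1 := by rw [← pow_mul, pow_mul', neg_one_sq, one_pow]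
      rw [hsk, integral_pow_mul_exp_neg_mul_laguerre_self, Nat.sub_self, Nat.choose_zero_right,
        add_comm α]
      push_cast
      linear_combination ((k + α)! / k ! : ℝ) * hsq
    · rw [integral_pow_mul_exp_neg_mul_laguerre_of_lt α (by rw [Finset.mem_range] at hs; omega),
        mul_zero]
  have hint : ∀ s, IntegrableOn (fun x => x ^ (α + s) * exp (-x) * laguerre k α x) (Ioi 0) :=
    fun s => by simpa using integrableOn_laguerre_pow (α + s) 1 k α
  calc ∫ x in Ioi 0, x ^ α * exp (-x) * laguerre k α x ^ 2
      = ∫ x in Ioi 0, ∑ s ∈ range (k + 1),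
          (-1) ^ s * (k + α).choose (k - s) / s !
            * (x ^ (α + s) * exp (-x) * laguerre k α x) := by
        refine setIntegral_congr_fun measurableSet_Ioi fun x _ => ?_
        conv_lhs => rw [sq, ← mul_assoc]; arg 2; rw [laguerre_eq_sum]
        rw [Finset.mul_sum]
        exact sum_congr rfl fun s _ => by ring
    _ = (k + α)! / k ! := by
        rw [integral_finsetSum _ fun s _ => (hint s).const_mul _, sum_congr rfl hmoment,
          sum_ite_eq' _ _ _, if_pos (self_mem_range_succ k)]

theorem laguerre_succ_succ (k α : ℕ) (x : ℝ) :
    laguerre (k + 1) (α + 1) x = laguerre (k + 1) α x + laguerre k (α + 1) x := by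
  simp only [laguerre, sum_range_succ _ (k + 1), Nat.sub_self, Nat.choose_zero_right]
  rw [add_right_comm (_ : ℝ), ← sum_add_distrib]
  congr 1
  refine sum_congr rfl fun i hi => ?_
  have hi := mem_range.mp hi
  rw [show k + 1 + (α + 1) = (k + α + 1) + 1 by ring, show k + 1 - i = (k - i) + 1 by omega,
    Nat.choose_succ_succ', show k + 1 + α = k + α + 1 by ring,
    show k + (α + 1) = k + α + 1 by ring]
  push_cast
  ring

theorem laguerre_succ_eq_sum (k α : ℕ) (x : ℝ) :
    laguerre k (α + 1) x = ∑ i ∈ range (k + 1), laguerre i α x := by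
  induction k with
  | zero => simp [laguerre]
  | succ k ih => rw [sum_range_succ, ← ih, laguerre_succ_succ, add_comm]

theorem factorial_add_div_factorial_le {i k : ℕ} (e : ℕ) (h : i ≤ k) :
    ((i + e)! / i ! : ℝ) ≤ (k + e)! / k ! := by
  simp only [← Nat.factorial_mul_ascFactorial, Nat.cast_mul]
  rw [mul_div_cancel_left₀ _ (by positivity), mul_div_cancel_left₀ _ (by positivity)]
  exact_mod_cast Nat.ascFactorial_le e (Nat.add_le_add_right h 1)

theorem integral_laguerre_succ_sq_le (k e : ℕ) :
    ∫ x in Ioi 0, x ^ e * exp (-x) * laguerre k (e + 1) x ^ 2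
      ≤ (k + 1) ^ 2 * ((k + e)! / k !) := by
  have hpoint : ∀ x ∈ Ioi (0 : ℝ), x ^ e * exp (-x) * laguerre k (e + 1) x ^ 2
      ≤ (k + 1) * ∑ i ∈ range (k + 1), x ^ e * exp (-x) * laguerre i e x ^ 2 := by
    intro x (hx : 0 < x)
    have hcs := sq_sum_le_card_mul_sum_sq (s := range (k + 1)) (f := fun i => laguerre i e x)
    rw [← laguerre_succ_eq_sum, card_range] at hcs
    rw [← mul_sum, mul_left_comm]
    push_cast at hcs
    exact mul_le_mul_of_nonneg_left hcs (by positivity)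
  calc ∫ x in Ioi 0, x ^ e * exp (-x) * laguerre k (e + 1) x ^ 2
      ≤ ∫ x in Ioi 0,
          (k + 1) * ∑ i ∈ range (k + 1), x ^ e * exp (-x) * laguerre i e x ^ 2 :=
        setIntegral_mono_on (integrableOn_laguerre_pow e 2 k (e + 1))
          ((integrable_finsetSum _ fun i _ => integrableOn_laguerre_pow e 2 i e).const_mul _)
          measurableSet_Ioi hpoint
    _ = (k + 1) * ∑ i ∈ range (k + 1), ((i + e)! / i ! : ℝ) := by
        rw [integral_const_mul, integral_finsetSum _ fun i _ => integrableOn_laguerre_pow e 2 i e]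
        simp only [integral_laguerre_sq]
    _ ≤ (k + 1) * ∑ _i ∈ range (k + 1), ((k + e)! / k ! : ℝ) := by
        refine mul_le_mul_of_nonneg_left (sum_le_sum fun i hi => ?_) (by positivity)
        exact factorial_add_div_factorial_le e (Nat.le_of_lt_succ (mem_range.mp hi))
    _ = (k + 1) ^ 2 * ((k + e)! / k !) := by
        rw [sum_const, card_range, nsmul_eq_mul]
        push_cast
        ring

theorem two_mul_le_of_sq_le_mul {a b c l : ℝ} (ha : 0 ≤ a) (hb : 0 ≤ b) (hl : 0 < l)
    (h : c ^ 2 ≤ a * b) : 2 * c ≤ l * a + l⁻¹ * b := by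
  have hsq : (2 * c) ^ 2 ≤ (l * a + l⁻¹ * b) ^ 2 := by
    have : l * l⁻¹ = 1 := mul_inv_cancel₀ hl.ne'
    nlinarith [sq_nonneg (l * a - l⁻¹ * b)]
  exact abs_le_of_sq_le_sq' hsq (by positivity) |>.2

theorem integral_le_sqrt_mul_of_sq_le_mul {X : Type*} [MeasurableSpace X] {μ : Measure X}
    {f g h : X → ℝ} (hf : Integrable f μ) (hg : Integrable g μ) (hh : Integrable h μ)
    (hf0 : 0 ≤ᵐ[μ] f) (hg0 : 0 ≤ᵐ[μ] g) (hfg : ∀ᵐ x ∂μ, h x ^ 2 ≤ f x * g x)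
    {A B : ℝ} (hA : 0 < A) (hB : 0 < B) (hfA : ∫ x, f x ∂μ ≤ A)
    (hgB : ∫ x, g x ∂μ ≤ B) :
    ∫ x, h x ∂μ ≤ √(A * B) := by
  -- Weighted AM–GM, with the weight that balances `l * A` against `B / l`.
  set l := √B / √A
  have hl : 0 < l := by positivity
  have hpoint : ∀ᵐ x ∂μ, h x ≤ (l * f x + l⁻¹ * g x) / 2 := by
    filter_upwards [hf0, hg0, hfg] with x hfx hgx hx
    linarith [two_mul_le_of_sq_le_mul hfx hgx hl hx]
  calc ∫ x, h x ∂μ ≤ ∫ x, (l * f x + l⁻¹ * g x) / 2 ∂μ :=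
        integral_mono_ae hh (((hf.const_mul l).add (hg.const_mul l⁻¹)).div_const 2) hpoint
    _ = (l * ∫ x, f x ∂μ + l⁻¹ * ∫ x, g x ∂μ) / 2 := by
        rw [integral_div, integral_add (hf.const_mul l) (hg.const_mul l⁻¹), integral_const_mul,
          integral_const_mul]
    _ ≤ (l * A + l⁻¹ * B) / 2 := by gcongr
    _ = √(A * B) := by
        have hsA := sq_sqrt hA.le
        have hsB := sq_sqrt hB.le
        have hA' : 0 < √A := sqrt_pos.2 hA
        have hB' : 0 < √B := sqrt_pos.2 hB
        rw [sqrt_mul hA.le]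
        simp only [l]
        field_simp
        rw [hsA, hsB]
        ring

theorem integral_rpow_neg_half_mul_laguerre_sq_succ_le (k e : ℕ) :
    ∫ x in Ioi 0, x ^ (-(1 / 2) : ℝ) * (x ^ (e + 1) * exp (-x) * laguerre k (e + 1) x ^ 2)
      ≤ √((k + e + 1 : ℕ) : ℝ) * ((k + e + 1)! / k !) := by
  -- `x^{-1/2} x^{e+1}` is the geometric mean of `x^e` and `x^{e+1}`.
  have hsq : ∀ x ∈ Ioi (0 : ℝ),
      (x ^ (-(1 / 2) : ℝ) * (x ^ (e + 1) * exp (-x) * laguerre k (e + 1) x ^ 2)) ^ 2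
        = (x ^ e * exp (-x) * laguerre k (e + 1) x ^ 2)
          * (x ^ (e + 1) * exp (-x) * laguerre k (e + 1) x ^ 2) := by
    intro x (hx : 0 < x)
    have : (x ^ (-(1 / 2) : ℝ)) ^ 2 = x⁻¹ := by
      rw [← rpow_natCast, ← rpow_mul hx.le, ← rpow_neg_one]
      norm_num
    rw [mul_pow, this, pow_succ]
    field_simp
    ring
  have hbound := integral_le_sqrt_mul_of_sq_le_mul (μ := volume.restrict (Ioi 0))
    (integrableOn_laguerre_pow e 2 k (e + 1)) (integrableOn_laguerre_pow (e + 1) 2 k (e + 1))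
    (integrableOn_rpow_mul_laguerre_pow (by norm_num) (e + 1) 2 k (e + 1))
    (ae_restrict_of_forall_mem measurableSet_Ioi fun x (hx : 0 < x) => by positivity)
    (ae_restrict_of_forall_mem measurableSet_Ioi fun x (hx : 0 < x) => by positivity)
    (ae_restrict_of_forall_mem measurableSet_Ioi fun x hx => (hsq x hx).le)
    (by positivity) (by positivity) (integral_laguerre_succ_sq_le k e)
    (integral_laguerre_sq k (e + 1)).le
  refine hbound.trans ((sqrt_le_left (by positivity)).2 ?_)
  rw [show k + (e + 1) = k + e + 1 by ring, Nat.factorial_succ]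
  push_cast
  rw [mul_pow, sq_sqrt (by positivity), mul_div_assoc]
  have hK : ((k : ℝ) + 1) ^ 2 ≤ (k + e + 1) ^ 2 := by
    gcongr
    linarith [(e.cast_nonneg : (0 : ℝ) ≤ e)]
  have := mul_le_mul_of_nonneg_right hK
    (by positivity : (0 : ℝ) ≤ (k + e + 1) * ((k + e)! / k !) ^ 2)
  linarith

theorem abs_laguerre_zero_le (k : ℕ) {x : ℝ} (hx : 0 ≤ x) :
    |laguerre k 0 x| ≤ (1 + x) ^ k := by
  rw [add_comm, add_pow]
  refine (abs_sum_le_sum_abs _ _).trans (sum_le_sum fun i hi => ?_)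
  have hi := mem_range.mp hi
  rw [add_zero, Nat.choose_symm (by omega), one_pow, mul_one, abs_div, abs_mul, abs_mul, abs_pow,
    abs_neg, abs_one, one_pow, one_mul, Nat.abs_cast, Nat.abs_cast, abs_of_nonneg (by positivity),
    mul_comm]
  exact div_le_self (by positivity) (by exact_mod_cast i.factorial_pos)

theorem integrableOn_rpow_neg_half_mul_exp_neg_mul_laguerre_sq (k α : ℕ) :
    IntegrableOn (fun x => x ^ (-(1 / 2) : ℝ) * (exp (-x) * laguerre k α x ^ 2)) (Ioi 0) := by
  simpa using integrableOn_rpow_mul_laguerre_pow (by norm_num) 0 2 k α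

theorem setIntegral_Ioc_rpow_neg_half_mul_laguerre_zero_sq_le (k : ℕ) :
    ∫ x in Ioc 0 ((k + 1 : ℕ) : ℝ)⁻¹,
      x ^ (-(1 / 2) : ℝ) * (exp (-x) * laguerre k 0 x ^ 2) ≤ 18 := by
  set ε : ℝ := ((k + 1 : ℕ) : ℝ)⁻¹
  have hε : 0 < ε := by positivity
  have hpoint : ∀ x ∈ Ioc 0 ε, x ^ (-(1 / 2) : ℝ) * (exp (-x) * laguerre k 0 x ^ 2)
      ≤ 9 * x ^ (-(1 / 2) : ℝ) := by
    rintro x ⟨hx0, hxε⟩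
    have hL : |laguerre k 0 x| ≤ 3 := calc
      |laguerre k 0 x| ≤ (1 + x) ^ k := abs_laguerre_zero_le k hx0.le
      _ ≤ (1 + ε) ^ (k + 1) :=
        (pow_le_pow_left₀ (by linarith) (by linarith) k).trans
          (pow_le_pow_right₀ (by linarith) k.le_succ)
      _ ≤ exp 1 := one_add_inv_pow_le_exp
      _ ≤ 3 := exp_one_lt_d9.le.trans (by norm_num)
    have hL2 : laguerre k 0 x ^ 2 ≤ 9 := by
      nlinarith [sq_abs (laguerre k 0 x), abs_nonneg (laguerre k 0 x)]
    have hexp : exp (-x) ≤ 1 := exp_le_one_iff.2 (by linarith)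
    rw [mul_comm 9]
    gcongr
    nlinarith [exp_pos (-x), sq_nonneg (laguerre k 0 x)]
  have hrpow : IntegrableOn (fun x : ℝ => x ^ (-(1 / 2) : ℝ)) (Ioc 0 ε) :=
    (intervalIntegrable_iff_integrableOn_Ioc_of_le hε.le).1
      (intervalIntegral.intervalIntegrable_rpow' (by norm_num))
  calc ∫ x in Ioc 0 ε, x ^ (-(1 / 2) : ℝ) * (exp (-x) * laguerre k 0 x ^ 2)
      ≤ ∫ x in Ioc 0 ε, 9 * x ^ (-(1 / 2) : ℝ) :=
        setIntegral_mono_on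
          ((integrableOn_rpow_neg_half_mul_exp_neg_mul_laguerre_sq k 0).mono_set
            Ioc_subset_Ioi_self)
          (hrpow.const_mul 9) measurableSet_Ioc hpoint
    _ = 18 * ε ^ (1 / 2 : ℝ) := by
        rw [integral_const_mul, ← intervalIntegral.integral_of_le hε.le,
          integral_rpow (Or.inl (by norm_num)), zero_rpow (by norm_num)]
        norm_num
        ring
    _ ≤ 18 := by
        have := rpow_le_one hε.le (inv_le_one_of_one_le₀ (by norm_cast; omega))
          (by norm_num : (0 : ℝ) ≤ 1 / 2)
        linarith

theorem setIntegral_Ioi_rpow_neg_half_mul_laguerre_zero_sq_le (k : ℕ) {ε : ℝ} (hε : 0 < ε) :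
    ∫ x in Ioi ε, x ^ (-(1 / 2) : ℝ) * (exp (-x) * laguerre k 0 x ^ 2)
      ≤ ε ^ (-(1 / 2) : ℝ) := by
  have hL : IntegrableOn (fun x => exp (-x) * laguerre k 0 x ^ 2) (Ioi 0) := by
    simpa using integrableOn_laguerre_pow 0 2 k 0
  have hpoint : ∀ x ∈ Ioi ε, x ^ (-(1 / 2) : ℝ) * (exp (-x) * laguerre k 0 x ^ 2)
      ≤ ε ^ (-(1 / 2) : ℝ) * (exp (-x) * laguerre k 0 x ^ 2) :=
    fun x (hx : ε < x) => mul_le_mul_of_nonneg_right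
      (rpow_le_rpow_of_nonpos hε hx.le (by norm_num)) (by positivity)
  have hnorm : ∫ x in Ioi 0, exp (-x) * laguerre k 0 x ^ 2 = 1 := by
    simpa [Nat.factorial_ne_zero] using integral_laguerre_sq k 0
  calc ∫ x in Ioi ε, x ^ (-(1 / 2) : ℝ) * (exp (-x) * laguerre k 0 x ^ 2)
      ≤ ∫ x in Ioi ε, ε ^ (-(1 / 2) : ℝ) * (exp (-x) * laguerre k 0 x ^ 2) :=
        setIntegral_mono_on ((integrableOn_rpow_neg_half_mul_exp_neg_mul_laguerre_sq k 0).mono_set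
          (Ioi_subset_Ioi hε.le)) ((hL.mono_set (Ioi_subset_Ioi hε.le)).const_mul _)
          measurableSet_Ioi hpoint
    _ ≤ ε ^ (-(1 / 2) : ℝ) * ∫ x in Ioi 0, exp (-x) * laguerre k 0 x ^ 2 := by
        rw [integral_const_mul]
        exact mul_le_mul_of_nonneg_left (setIntegral_mono_set hL
          (ae_restrict_of_forall_mem measurableSet_Ioi fun x _ => by positivity)
          (Ioi_subset_Ioi hε.le).eventuallyLE) (by positivity)
    _ = ε ^ (-(1 / 2) : ℝ) := by rw [hnorm, mul_one]

theorem integral_rpow_neg_half_mul_laguerre_zero_sq_le (k : ℕ) :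
    ∫ x in Ioi 0, x ^ (-(1 / 2) : ℝ) * (exp (-x) * laguerre k 0 x ^ 2)
      ≤ 18 + √((k + 1 : ℕ) : ℝ) := by
  set ε : ℝ := ((k + 1 : ℕ) : ℝ)⁻¹
  have hε : 0 < ε := by positivity
  have hint := integrableOn_rpow_neg_half_mul_exp_neg_mul_laguerre_sq k 0
  have hεrpow : ε ^ (-(1 / 2) : ℝ) = √((k + 1 : ℕ) : ℝ) := by
    rw [inv_rpow (by positivity), ← rpow_neg (by positivity), neg_neg, sqrt_eq_rpow]
  rw [← Ioc_union_Ioi_eq_Ioi hε.le, setIntegral_union (Ioc_disjoint_Ioi le_rfl) measurableSet_Ioi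
    (hint.mono_set Ioc_subset_Ioi_self) (hint.mono_set (Ioi_subset_Ioi hε.le)), ← hεrpow]
  exact add_le_add (setIntegral_Ioc_rpow_neg_half_mul_laguerre_zero_sq_le k)
    (setIntegral_Ioi_rpow_neg_half_mul_laguerre_zero_sq_le k hε)

theorem integral_rpow_neg_half_mul_laguerre_sq_le (k d : ℕ) :
    ∫ x in Ioi 0, x ^ (-(1 / 2) : ℝ) * (x ^ d * exp (-x) * laguerre k d x ^ 2)
      ≤ 19 * √((k + d + 1 : ℕ) : ℝ) * ((k + d)! / k !) := by
  have hone : 1 ≤ √((k + d + 1 : ℕ) : ℝ) := one_le_sqrt.2 (by norm_cast; omega)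
  cases d with
  | zero =>
    have hk : (k ! : ℝ) ≠ 0 := by positivity
    simp only [pow_zero, one_mul, add_zero, div_self hk, mul_one] at hone ⊢
    linarith [integral_rpow_neg_half_mul_laguerre_zero_sq_le k]
  | succ e =>
    refine (integral_rpow_neg_half_mul_laguerre_sq_succ_le k e).trans ?_
    rw [← add_assoc]
    have hmono : √((k + e + 1 : ℕ) : ℝ) ≤ √((k + e + 1 + 1 : ℕ) : ℝ) :=
      sqrt_le_sqrt (by norm_cast; omega)
    have hratio : (0 : ℝ) ≤ (k + e + 1)! / k ! := by positivity
    nlinarith [sqrt_nonneg ((k + e + 1 : ℕ) : ℝ)]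

theorem integral_comp_sq_div_two (F : ℝ → ℝ) :
    ∫ t, F (t ^ 2 / 2) = √2 * ∫ x in Ioi 0, x ^ (-(1 / 2) : ℝ) * F x := by
  have hsym : ∫ t, F (t ^ 2 / 2) = 2 * ∫ t in Ioi 0, F (t ^ 2 / 2) := by
    rw [← integral_comp_abs]
    simp_rw [sq_abs]
  have hscale : ∫ t in Ioi 0, F (t ^ 2 / 2) = √2 * ∫ s in Ioi 0, F (s ^ 2) := by
    have h := integral_comp_mul_left_Ioi (fun t => F (t ^ 2 / 2)) 0 (b := √2) (by positivity)
    simp_rw [mul_zero, mul_pow, sq_sqrt zero_le_two,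
      mul_div_cancel_left₀ _ (two_ne_zero' ℝ)] at h
    rw [h, smul_eq_mul, mul_inv_cancel_left₀ (by positivity)]
  have hsqrt : ∫ s in Ioi 0, F (s ^ 2) = 2⁻¹ * ∫ x in Ioi 0, x ^ (-(1 / 2) : ℝ) * F x := by
    rw [← integral_comp_rpow_Ioi (fun s => F (s ^ 2)) (p := 1 / 2) (by norm_num),
      ← integral_const_mul]
    refine setIntegral_congr_fun measurableSet_Ioi fun x (hx : 0 < x) => ?_
    simp only [smul_eq_mul]
    rw [← sqrt_eq_rpow, sq_sqrt hx.le]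
    norm_num
    ring
  rw [hsym, hscale, hsqrt]
  ring

theorem norm_patternFT_add_sq (k d : ℕ) (t : ℝ) :
    ‖patternFT (k + d) k t‖ ^ 2
      = π ^ 2 * (k ! / (k + d)!)
        * ((t ^ 2 / 2) ^ d * exp (-(t ^ 2 / 2)) * laguerre k d (t ^ 2 / 2) ^ 2) := by
  rw [patternFT, max_eq_left (Nat.le_add_right k d), min_eq_right (Nat.le_add_right k d),
    Nat.add_sub_cancel_left]
  simp only [norm_mul, norm_pow, norm_neg, Complex.norm_I, one_pow, mul_one, Complex.norm_real,
    Real.norm_eq_abs, abs_of_pos pi_pos, abs_of_nonneg (sqrt_nonneg _)]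
  have hexp : exp (-t ^ 2 / 4) ^ 2 = exp (-(t ^ 2 / 2)) := by rw [sq, ← exp_add]; ring_nf
  rw [mul_pow, mul_pow, sq_sqrt (by positivity), mul_pow, mul_pow, ← pow_mul, mul_comm d,
    pow_mul]
  simp only [sq_abs, hexp, div_pow]
  field_simp

theorem patternFT_comm (j k : ℕ) : patternFT j k = patternFT k j := by
  unfold patternFT
  rw [max_comm, min_comm]

theorem integral_norm_patternFT_add_sq (k d : ℕ) :
    ∫ t, ‖patternFT (k + d) k t‖ ^ 2 = π ^ 2 * √2 * (k ! / (k + d)!)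
      * ∫ x in Ioi 0, x ^ (-(1 / 2) : ℝ) * (x ^ d * exp (-x) * laguerre k d x ^ 2) := by
  simp_rw [norm_patternFT_add_sq]
  rw [integral_comp_sq_div_two
      (fun x => π ^ 2 * (k ! / (k + d)!) * (x ^ d * exp (-x) * laguerre k d x ^ 2)),
    ← integral_const_mul, ← integral_const_mul]
  refine setIntegral_congr_fun measurableSet_Ioi fun x _ => ?_
  ring

theorem inv_two_pi_mul_integral_norm_patternFT_sq_le (j k : ℕ) :
    (2 * π)⁻¹ * ∫ t, ‖patternFT j k t‖ ^ 2
      ≤ 19 * π * √((max j k + 1 : ℕ) : ℝ) := by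
  wlog hkj : k ≤ j generalizing j k
  · rw [patternFT_comm, max_comm]
    exact this k j (by omega)
  obtain ⟨d, rfl⟩ := Nat.exists_eq_add_of_le hkj
  rw [max_eq_left hkj, integral_norm_patternFT_add_sq]
  have hk : (k ! : ℝ) ≠ 0 := by positivity
  have hkd : ((k + d)! : ℝ) ≠ 0 := by positivity
  have hsqrt2 : √2 ≤ 2 := by rw [sqrt_le_left zero_le_two]; norm_num
  calc (2 * π)⁻¹ * (π ^ 2 * √2 * (k ! / (k + d)!)
        * ∫ x in Ioi 0, x ^ (-(1 / 2) : ℝ) * (x ^ d * exp (-x) * laguerre k d x ^ 2))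
      ≤ (2 * π)⁻¹ * (π ^ 2 * √2 * (k ! / (k + d)!)
        * (19 * √((k + d + 1 : ℕ) : ℝ) * ((k + d)! / k !))) := by
        gcongr
        exact integral_rpow_neg_half_mul_laguerre_sq_le k d
    _ = π * (√2 / 2) * (19 * √((k + d + 1 : ℕ) : ℝ)) := by
        field_simp
    _ ≤ π * 1 * (19 * √((k + d + 1 : ℕ) : ℝ)) := by gcongr; linarith
    _ = 19 * π * √((k + d + 1 : ℕ) : ℝ) := by ring

theorem add_one_sq_mul_sqrt_le_rpow {x : ℝ} (hx : 1 ≤ x) :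
    (x + 1) ^ 2 * √(x + 1) ≤ 2 ^ (17 / 6 : ℝ) * x ^ (17 / 6 : ℝ) := by
  have hx0 : 0 < x + 1 := by linarith
  calc (x + 1) ^ 2 * √(x + 1) = (x + 1) ^ (5 / 2 : ℝ) := by
        rw [sqrt_eq_rpow, ← rpow_natCast, ← rpow_add hx0]
        norm_num
    _ ≤ (2 * x) ^ (5 / 2 : ℝ) := by gcongr; linarith
    _ ≤ (2 * x) ^ (17 / 6 : ℝ) := rpow_le_rpow_of_exponent_le (by linarith) (by norm_num)
    _ = 2 ^ (17 / 6 : ℝ) * x ^ (17 / 6 : ℝ) := mul_rpow zero_le_two (by linarith)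

/-- There exist `C₂ > 0` and `N₀` such that for all `N ≥ N₀`,
`∑_{j=0}^{N} ∑_{k=0}^{N} (2π)⁻¹ ∫ |f̃_{j,k}(t)|² dt ≤ C₂ N^{17/6}`. -/
theorem pattern_l2_bound :
    ∃ C₂ : ℝ, 0 < C₂ ∧ ∃ N₀ : ℕ, ∀ N : ℕ, N₀ ≤ N →
      ∑ j ∈ Finset.range (N + 1), ∑ k ∈ Finset.range (N + 1),
        (2 * Real.pi)⁻¹ * ∫ t : ℝ, ‖patternFT j k t‖ ^ 2
      ≤ C₂ * (N : ℝ) ^ ((17 : ℝ) / 6) := by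
  refine ⟨19 * π * 2 ^ (17 / 6 : ℝ), by positivity, 1, fun N hN => ?_⟩
  have hterm : ∀ j ∈ range (N + 1), ∀ k ∈ range (N + 1),
      (2 * π)⁻¹ * ∫ t, ‖patternFT j k t‖ ^ 2 ≤ 19 * π * √((N : ℝ) + 1) := by
    intro j hj k hk
    have hmax : max j k + 1 ≤ N + 1 := by rw [Finset.mem_range] at hj hk; omega
    refine (inv_two_pi_mul_integral_norm_patternFT_sq_le j k).trans ?_
    gcongr
    exact_mod_cast hmax
  calc ∑ j ∈ range (N + 1), ∑ k ∈ range (N + 1),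
        (2 * π)⁻¹ * ∫ t, ‖patternFT j k t‖ ^ 2
      ≤ ∑ _j ∈ range (N + 1), ∑ _k ∈ range (N + 1), 19 * π * √((N : ℝ) + 1) :=
        sum_le_sum fun j hj => sum_le_sum fun k hk => hterm j hj k hk
    _ = 19 * π * (((N : ℝ) + 1) ^ 2 * √((N : ℝ) + 1)) := by
        simp only [sum_const, card_range, nsmul_eq_mul]
        push_cast
        ring
    _ ≤ 19 * π * (2 ^ (17 / 6 : ℝ) * (N : ℝ) ^ (17 / 6 : ℝ)) :=
        mul_le_mul_of_nonneg_left (add_one_sq_mul_sqrt_le_rpow (by exact_mod_cast hN))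
          (by positivity)
    _ = 19 * π * 2 ^ (17 / 6 : ℝ) * (N : ℝ) ^ ((17 : ℝ) / 6) := by ring
end

section
/- Let X be a real-valued random variable on a probability space, let ξ be a standard Gaussian random variable independent of X, let η ∈ (1/2, 1), γ = (1−η)/(4η), and set Y = √η · X + √((1−η)/2) · ξ. Let g : ℝ → ℂ be continuous and integrable, with Fourier transform ĝ(t) = ∫_ℝ g(x) e^{−itx} dx, and assume that t ↦ ĝ(t) e^{γt²} is integrable on ℝ. Define g^η(x) = (2π)^{−1} ∫_ℝ ĝ(t) e^{γt²} e^{itx} dt. Then E[g^η(Y/√η)] = E[g(X)]. -/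
open MeasureTheory ProbabilityTheory Complex Real
open scoped FourierTransform

/-!
Write `Y / √η = X + c ξ` with `c² = 2γ`. The characteristic function of `c ξ` is `e^{-γt²}`,
which cancels the factor `e^{γt²}` in `g^η`; so Fubini and Fourier inversion give
`E[g^η(x + c ξ)] = g(x)` for every `x`, and independence of `X` and `ξ` lets one integrate this
identity against the law of `X`.
-/

theorem ProbabilityTheory.IndepFun.integral_comp_eq_integral_integral {Ω α β E : Type*}
    [MeasurableSpace Ω] [MeasurableSpace α] [MeasurableSpace β]
    [NormedAddCommGroup E] [NormedSpace ℝ E]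
    {P : Measure Ω} [IsFiniteMeasure P] {X : Ω → α} {Y : Ω → β} (hXY : IndepFun X Y P)
    (hX : AEMeasurable X P) (hY : AEMeasurable Y P) {f : α × β → E}
    (hf : Integrable f ((P.map X).prod (P.map Y))) :
    ∫ ω, f (X ω, Y ω) ∂P = ∫ x, ∫ y, f (x, y) ∂(P.map Y) ∂(P.map X) := by
  have hlaw := hXY.map_prod_eq_prod_map_map hX hY
  rw [← integral_prod f hf, ← hlaw, integral_map (hX.prodMk hY) (hlaw ▸ hf.aestronglyMeasurable)]

lemma norm_cexp_I_mul_mul (t x : ℝ) : ‖cexp (I * t * x)‖ = 1 := by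
  rw [show I * t * x = ((t * x : ℝ) : ℂ) * I by push_cast; ring, norm_exp_ofReal_mul_I]

lemma fourier_div_two_pi_eq_integral (g : ℝ → ℂ) (t : ℝ) :
    𝓕 g (t / (2 * π)) = ∫ x, g x * cexp (-I * t * x) := by
  rw [Real.fourier_real_eq_integral_exp_smul]
  congr 1 with x
  rw [smul_eq_mul, mul_comm]
  congr 2
  push_cast
  field_simp

lemma integral_fourier_div_two_pi_mul_cexp {g : ℝ → ℂ} (hgc : Continuous g) (hgi : Integrable g)
    (hFg : Integrable fun t : ℝ => 𝓕 g (t / (2 * π))) (x : ℝ) :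
    ∫ t : ℝ, 𝓕 g (t / (2 * π)) * cexp (I * t * x) = 2 * π * g x := by
  have h2π : (2 * π : ℝ) ≠ 0 := by positivity
  have hFg' : Integrable (𝓕 g) := by
    simpa [mul_div_cancel_left₀ _ h2π] using hFg.comp_mul_left' h2π
  set F : ℝ → ℂ := fun w => 𝓕 g w * cexp (↑(2 * π * w * x) * I)
  have hF : ∀ t : ℝ, 𝓕 g (t / (2 * π)) * cexp (I * t * x) = F (t / (2 * π)) := by
    intro t
    simp only [F]
    congr 2
    push_cast
    field_simp
  have hinv : ∫ w, F w = g x := by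
    conv_rhs => rw [← hgc.fourierInv_fourier_eq hgi hFg']
    rw [Real.fourierInv_eq']
    congr 1 with w
    simp only [F, smul_eq_mul, RCLike.inner_apply, conj_trivial, mul_comm (𝓕 g w)]
    congr 3
    push_cast
    ring
  simp_rw [hF, Measure.integral_comp_div F (2 * π), hinv, abs_of_pos (by positivity : 0 < 2 * π),
    Complex.real_smul]
  push_cast
  ring

lemma continuous_integral_mul_cexp {h : ℝ → ℂ} (hh : Integrable h) :
    Continuous fun x : ℝ => ∫ t, h t * cexp (I * t * x) := by
  refine continuous_of_dominated (bound := fun t => ‖h t‖) (fun x => ?_) (fun x => ?_) hh.norm ?_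
  · exact hh.aestronglyMeasurable.mul
      (by fun_prop : Continuous fun t : ℝ => cexp (I * t * x)).aestronglyMeasurable
  · exact Filter.Eventually.of_forall fun t => by rw [norm_mul, norm_cexp_I_mul_mul, mul_one]
  · exact Filter.Eventually.of_forall fun t => by fun_prop

lemma norm_integral_mul_cexp_le (h : ℝ → ℂ) (x : ℝ) :
    ‖∫ t, h t * cexp (I * t * x)‖ ≤ ∫ t, ‖h t‖ :=
  (norm_integral_le_integral_norm _).trans_eq <| by
    simp_rw [norm_mul, norm_cexp_I_mul_mul, mul_one]

lemma integral_cexp_I_mul_add_mul_gaussianReal (t x c : ℝ) :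
    ∫ y, cexp (I * t * (x + c * y)) ∂gaussianReal 0 1 =
      cexp (I * t * x) * cexp (-((c * t) ^ 2 / 2) : ℝ) := by
  have h := charFun_gaussianReal (μ := 0) (v := 1) (c * t)
  rw [charFun_apply_real] at h
  simp_rw [mul_add, Complex.exp_add]
  rw [integral_const_mul]
  congr 1
  calc ∫ y, cexp (I * t * (c * y)) ∂gaussianReal 0 1
      = ∫ y, cexp (↑(c * t) * y * I) ∂gaussianReal 0 1 := by
        congr 1 with y
        push_cast
        ring_nf
    _ = _ := by
        rw [h]
        push_cast
        ring_nf

lemma MeasureTheory.Integrable.of_mul_cexp_mul_sq {h : ℝ → ℂ} {γ : ℝ} (hγ : 0 ≤ γ)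
    (hh : Integrable fun t : ℝ => h t * cexp (γ * t ^ 2 : ℝ)) : Integrable h := by
  have hbdd : ∀ t : ℝ, ‖cexp (-(γ * t ^ 2) : ℝ)‖ ≤ 1 := fun t => by
    rw [norm_exp_ofReal]
    exact Real.exp_le_one_iff.2 (by nlinarith [sq_nonneg t])
  convert hh.mul_bdd (by fun_prop) (Filter.Eventually.of_forall hbdd) using 2 with t
  rw [mul_assoc, ← Complex.exp_add, ← ofReal_add, add_neg_cancel, ofReal_zero, Complex.exp_zero,
    mul_one]

/-- The paper's `g^η` for `γ = (1 - η) / (4η)`, with `ĝ(t) = 𝓕 g (t / (2π))` since Mathlib's `𝓕`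
uses the kernel `e^{-2πiξx}`. -/
noncomputable def gaussianDeconv (γ : ℝ) (g : ℝ → ℂ) (x : ℝ) : ℂ :=
  (2 * π)⁻¹ * ∫ t : ℝ, 𝓕 g (t / (2 * π)) * cexp (γ * t ^ 2 : ℝ) * cexp (I * t * x)

section gaussianDeconv

variable {γ : ℝ} {g : ℝ → ℂ}

lemma continuous_gaussianDeconv
    (hint : Integrable fun t : ℝ => 𝓕 g (t / (2 * π)) * cexp (γ * t ^ 2 : ℝ)) :
    Continuous (gaussianDeconv γ g) :=
  continuous_const.mul (continuous_integral_mul_cexp hint)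

lemma norm_gaussianDeconv_le (x : ℝ) :
    ‖gaussianDeconv γ g x‖ ≤ (2 * π)⁻¹ * ∫ t : ℝ, ‖𝓕 g (t / (2 * π)) * cexp (γ * t ^ 2 : ℝ)‖ := by
  rw [gaussianDeconv, norm_mul, norm_real, Real.norm_of_nonneg (by positivity)]
  gcongr
  exact norm_integral_mul_cexp_le _ x

theorem integral_gaussianDeconv_add_mul_gaussianReal (hgc : Continuous g) (hgi : Integrable g)
    {c : ℝ} (hc : c ^ 2 = 2 * γ)
    (hint : Integrable fun t : ℝ => 𝓕 g (t / (2 * π)) * cexp (γ * t ^ 2 : ℝ)) (x : ℝ) :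
    ∫ y, gaussianDeconv γ g (x + c * y) ∂gaussianReal 0 1 = g x := by
  have hFg : Integrable fun t : ℝ => 𝓕 g (t / (2 * π)) :=
    hint.of_mul_cexp_mul_sq (by nlinarith [sq_nonneg c])
  have hprod : Integrable (Function.uncurry fun (y t : ℝ) =>
      𝓕 g (t / (2 * π)) * cexp (γ * t ^ 2 : ℝ) * cexp (I * t * ↑(x + c * y)))
      ((gaussianReal 0 1).prod volume) :=
    (hint.comp_snd _).mul_bdd (by fun_prop)
      (Filter.Eventually.of_forall fun z => (norm_cexp_I_mul_mul _ _).le)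
  have hinner (t : ℝ) :
      ∫ y, 𝓕 g (t / (2 * π)) * cexp (γ * t ^ 2 : ℝ) * cexp (I * t * ↑(x + c * y))
          ∂gaussianReal 0 1 = 𝓕 g (t / (2 * π)) * cexp (I * t * x) := by
    push_cast
    rw [integral_const_mul, integral_cexp_I_mul_add_mul_gaussianReal, mul_pow, hc]
    have hcancel : cexp (γ * t ^ 2) * cexp ((-(2 * γ * t ^ 2 / 2) : ℝ) : ℂ) = 1 := by
      rw [← Complex.exp_add]
      push_cast
      ring_nf
      exact Complex.exp_zero
    linear_combination (𝓕 g (t / (2 * π)) * cexp (I * t * x)) * hcancel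
  calc ∫ y, gaussianDeconv γ g (x + c * y) ∂gaussianReal 0 1
      = (2 * π)⁻¹ * ∫ y, (∫ t, 𝓕 g (t / (2 * π)) * cexp (γ * t ^ 2 : ℝ) *
          cexp (I * t * ↑(x + c * y))) ∂gaussianReal 0 1 :=
        integral_const_mul _ _
    _ = (2 * π)⁻¹ * ∫ t, ∫ y, 𝓕 g (t / (2 * π)) * cexp (γ * t ^ 2 : ℝ) *
          cexp (I * t * ↑(x + c * y)) ∂gaussianReal 0 1 := by
        rw [integral_integral_swap hprod]
    _ = g x := by
        simp_rw [hinner, integral_fourier_div_two_pi_mul_cexp hgc hgi hFg]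
        push_cast
        field_simp

end gaussianDeconv

/-- Unbiasedness through the noisy observation: if `Y = √η X + √((1−η)/2) ξ` with `ξ` a standard
Gaussian independent of `X`, `η ∈ (1/2,1)`, `γ = (1−η)/(4η)`, `g` continuous integrable with
Fourier transform `gFT`, `gFT(t)e^{γt²}` integrable, and
`g^η(x) = (2π)⁻¹ ∫ gFT(t) e^{γt²} e^{itx} dt`, then `E[g^η(Y/√η)] = E[g(X)]`. -/
theorem noisy_unbiased {Ω : Type*} [MeasureSpace Ω]
    [IsProbabilityMeasure (ℙ : Measure Ω)]
    (X ξ : Ω → ℝ) (hX : Measurable X) (hξ : Measurable ξ)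
    (hlaw : Measure.map ξ ℙ = gaussianReal 0 1)
    (hindep : IndepFun X ξ ℙ)
    (η : ℝ) (hη : η ∈ Set.Ioo (1/2 : ℝ) 1)
    (γ : ℝ) (hγ : γ = (1 - η) / (4 * η))
    (Y : Ω → ℝ) (hY : ∀ ω, Y ω = Real.sqrt η * X ω + Real.sqrt ((1 - η) / 2) * ξ ω)
    (g : ℝ → ℂ) (hgc : Continuous g) (hgi : Integrable g)
    (gFT : ℝ → ℂ) (hgFT : ∀ t : ℝ, gFT t = ∫ x : ℝ, g x * Complex.exp (-Complex.I * t * x))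
    (hint : Integrable (fun t : ℝ => gFT t * Complex.exp ((γ * t ^ 2 : ℝ) : ℂ)))
    (gη : ℝ → ℂ)
    (hgη : ∀ x : ℝ, gη x = (2 * Real.pi)⁻¹ *
      ∫ t : ℝ, gFT t * Complex.exp ((γ * t ^ 2 : ℝ) : ℂ) *
        Complex.exp (Complex.I * (t : ℂ) * (x : ℂ))) :
    ∫ ω, gη (Y ω / Real.sqrt η) = ∫ ω, g (X ω) := by
  have hη0 : 0 < η := by linarith [hη.1]
  set c := √((1 - η) / 2) / √η with hc_def
  have hc : c ^ 2 = 2 * γ := by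
    rw [div_pow, Real.sq_sqrt (by linarith [hη.2]), Real.sq_sqrt hη0.le, hγ]
    field_simp
    ring
  have hYX (ω : Ω) : Y ω / √η = X ω + c * ξ ω := by
    rw [hY, hc_def]
    field_simp
  obtain rfl : gFT = fun t => 𝓕 g (t / (2 * π)) :=
    funext fun t => by rw [hgFT, fourier_div_two_pi_eq_integral]
  obtain rfl : gη = gaussianDeconv γ g := funext hgη
  have : IsProbabilityMeasure (Measure.map X ℙ) :=
    Measure.isProbabilityMeasure_map hX.aemeasurable
  have hint_comp : Integrable (fun p : ℝ × ℝ => gaussianDeconv γ g (p.1 + c * p.2))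
      ((Measure.map X ℙ).prod (Measure.map ξ ℙ)) := by
    rw [hlaw]
    exact .of_bound ((continuous_gaussianDeconv hint).comp (by fun_prop)).aestronglyMeasurable _
      (.of_forall fun _ => norm_gaussianDeconv_le _)
  simp_rw [hYX]
  rw [hindep.integral_comp_eq_integral_integral hX.aemeasurable hξ.aemeasurable hint_comp, hlaw,
    ← integral_map hX.aemeasurable hgc.aestronglyMeasurable]
  exact integral_congr_ae
    (.of_forall (integral_gaussianDeconv_add_mul_gaussianReal hgc hgi hc hint))
end

section
/- Let B > 0, η ∈ (1/2, 1) and γ = (1−η)/(4η). For n ≥ 3 define the bandwidth N₂(n) = (log n)/(4(4γ+B)) · (1 + 8 log log n/(3 log n)) and the rate φ_n² = (log n)^{(12γ−B)/(3(4γ+B))} · n^{−B/(2(4γ+B))}. Then there exist constants C₁, C₂ > 0 and n₀ ∈ ℕ such that for all n ≥ n₀: (i) n^{−1} · N₂(n)^{−2/3} · e^{16γ N₂(n)} ≤ C₁ · φ_n⁴, and (ii) N₂(n) · e^{−2B N₂(n)} ≤ C₂ · φ_n². -/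
/-!
Write `A = 4γ + B`, `L = log n` and `N = N₂(n) = L/(4A) + 2 log L/(3A)`. Then
`exp (c N) = n^{c/(4A)} L^{2c/(3A)}`, so both sides of each bound are exponentials of linear
combinations of `L` and `log L`. The exponents of `φ_n²` are chosen so that `φ_n² = L e^{-2BN}`
exactly, which gives (ii) from `N ≤ 11 L/(12A)`; in (i) the only loss is `N ≥ L/(4A)`, which
bounds `N^{-2/3}` by `(4A)^{2/3} L^{-2/3}`, and the remaining powers of `n` and `L` match exactly.
-/

open Real

noncomputable section

def bandwidth (γ B x : ℝ) : ℝ :=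
  log x / (4 * (4 * γ + B)) + 2 * log (log x) / (3 * (4 * γ + B))

def rate (γ B x : ℝ) : ℝ :=
  log x ^ ((12 * γ - B) / (3 * (4 * γ + B))) * x ^ (-B / (2 * (4 * γ + B)))

end

theorem log_rpow_mul_rpow_eq_exp {x : ℝ} (hx : 1 < x) (a b : ℝ) :
    log x ^ a * x ^ b = exp (a * log (log x) + b * log x) := by
  rw [rpow_def_of_pos (log_pos hx), rpow_def_of_pos (by linarith), exp_add, mul_comm a,
    mul_comm b]

/-- When `log x = 0` both sides vanish, because `log 0 = 0`. -/
theorem div_mul_one_add_log_log_div_eq_bandwidth (γ B x : ℝ) :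
    log x / (4 * (4 * γ + B)) * (1 + 8 * log (log x) / (3 * log x)) = bandwidth γ B x := by
  unfold bandwidth
  rcases eq_or_ne (log x) 0 with hL | hL
  · simp [hL]
  · rw [mul_add, mul_one]
    congr 1
    field_simp
    ring

section

variable {γ B : ℝ}

theorem div_le_bandwidth (hA : 0 < 4 * γ + B) {x : ℝ} (hx : 1 ≤ log x) :
    log x / (4 * (4 * γ + B)) ≤ bandwidth γ B x := by
  have : 0 ≤ 2 * log (log x) / (3 * (4 * γ + B)) := by
    have := log_nonneg hx
    positivity
  unfold bandwidth
  linarith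

theorem bandwidth_le (hA : 0 < 4 * γ + B) {x : ℝ} (hx : 0 < log x) :
    bandwidth γ B x ≤ 11 / (12 * (4 * γ + B)) * log x := by
  calc bandwidth γ B x ≤ log x / (4 * (4 * γ + B)) + 2 * log x / (3 * (4 * γ + B)) := by
        unfold bandwidth
        gcongr _ + 2 * ?_ / _
        exact log_le_self hx.le
    _ = 11 / (12 * (4 * γ + B)) * log x := by
        field_simp
        ring

theorem rate_eq_log_mul_exp_bandwidth (hA : 4 * γ + B ≠ 0) {x : ℝ} (hx : 1 < x) :
    rate γ B x = log x * exp (-2 * B * bandwidth γ B x) := by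
  have hexponent : (12 * γ - B) / (3 * (4 * γ + B)) * log (log x)
      + -B / (2 * (4 * γ + B)) * log x = log (log x) + -2 * B * bandwidth γ B x := by
    unfold bandwidth
    generalize hAdef : 4 * γ + B = A at *
    field_simp
    linear_combination 24 * log (log x) * hAdef
  rw [rate, log_rpow_mul_rpow_eq_exp hx, hexponent, exp_add, exp_log (log_pos hx)]

theorem bandwidth_mul_exp_le_rate (hA : 0 < 4 * γ + B) {x : ℝ} (hx : 1 < x) :
    bandwidth γ B x * exp (-2 * B * bandwidth γ B x)
      ≤ 11 / (12 * (4 * γ + B)) * rate γ B x := by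
  rw [rate_eq_log_mul_exp_bandwidth hA.ne' hx, ← mul_assoc]
  gcongr
  exact bandwidth_le hA (log_pos hx)

theorem inv_mul_bandwidth_rpow_mul_exp_le_rate_sq (hA : 0 < 4 * γ + B) {x : ℝ}
    (hx : exp 1 ≤ x) :
    x⁻¹ * bandwidth γ B x ^ (-(2 : ℝ) / 3) * exp (16 * γ * bandwidth γ B x)
      ≤ (4 * (4 * γ + B)) ^ ((2 : ℝ) / 3) * rate γ B x ^ 2 := by
  have hx1 : 1 < x := (one_lt_exp_iff.mpr one_pos).trans_le hx
  have hL : 1 ≤ log x := (le_log_iff_exp_le (by linarith)).mpr hx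
  have hA4 : 0 < 4 * (4 * γ + B) := by positivity
  set N := bandwidth γ B x
  have hN : log x / (4 * (4 * γ + B)) ≤ N := div_le_bandwidth hA hL
  have hlogN : log (log x) - log (4 * (4 * γ + B)) ≤ log N := by
    rw [← log_div (by positivity) hA4.ne']
    exact log_le_log (by positivity) hN
  have hexponent : -log x + (-(2 : ℝ) / 3) * (log (log x) - log (4 * (4 * γ + B))) + 16 * γ * N
      = 2 / 3 * log (4 * (4 * γ + B)) + 2 * ((12 * γ - B) / (3 * (4 * γ + B)) * log (log x)
        + -B / (2 * (4 * γ + B)) * log x) := by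
    simp only [N, bandwidth]
    generalize hAdef : 4 * γ + B = A at *
    field_simp
    linear_combination (12 * log x + 8 * log (log x)) * hAdef
  calc x⁻¹ * N ^ (-(2 : ℝ) / 3) * exp (16 * γ * N)
      = exp (-log x + (-(2 : ℝ) / 3) * log N + 16 * γ * N) := by
        rw [exp_add, exp_add, exp_neg, exp_log (by linarith),
          rpow_def_of_pos ((div_pos (by linarith) hA4).trans_le hN), mul_comm (log N)]
    _ ≤ exp (-log x + (-(2 : ℝ) / 3) * (log (log x) - log (4 * (4 * γ + B))) + 16 * γ * N) := by
        gcongr exp (_ + ?_ + _)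
        linarith
    _ = (4 * (4 * γ + B)) ^ ((2 : ℝ) / 3) * rate γ B x ^ 2 := by
        rw [hexponent, exp_add, rate, log_rpow_mul_rpow_eq_exp hx1, ← exp_nat_mul,
          rpow_def_of_pos hA4, mul_comm (log _)]
        norm_num

end

/-- For `η ∈ (1/2,1)`, `γ = (1−η)/(4η)`, the bandwidth
`N₂(n) = (log n)/(4(4γ+B)) (1 + 8 log log n/(3 log n))` and the rate
`φ_n² = (log n)^{(12γ−B)/(3(4γ+B))} n^{−B/(2(4γ+B))}`, there are constants `C₁, C₂ > 0` and `n₀`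
such that for all `n ≥ n₀`: (i) `n⁻¹ N₂(n)^{−2/3} e^{16γN₂(n)} ≤ C₁ φ_n⁴` and
(ii) `N₂(n) e^{−2BN₂(n)} ≤ C₂ φ_n²`. -/
theorem variance_bias_rate_noisy (B : ℝ) (hB : 0 < B)
    (η : ℝ) (hη : η ∈ Set.Ioo (1/2 : ℝ) 1) (γ : ℝ) (hγ : γ = (1 - η) / (4 * η))
    (N₂ φsq : ℕ → ℝ)
    (hN₂ : ∀ n : ℕ, N₂ n =
      Real.log n / (4 * (4 * γ + B)) * (1 + 8 * Real.log (Real.log n) / (3 * Real.log n)))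
    (hφ : ∀ n : ℕ, φsq n =
      (Real.log n) ^ ((12 * γ - B) / (3 * (4 * γ + B))) * (n : ℝ) ^ (-B / (2 * (4 * γ + B)))) :
    ∃ C₁ : ℝ, 0 < C₁ ∧ ∃ C₂ : ℝ, 0 < C₂ ∧ ∃ n₀ : ℕ, 3 ≤ n₀ ∧ ∀ n : ℕ, n₀ ≤ n →
      (n : ℝ)⁻¹ * (N₂ n) ^ (-(2 : ℝ) / 3) * Real.exp (16 * γ * N₂ n) ≤ C₁ * (φsq n) ^ 2 ∧
      N₂ n * Real.exp (-2 * B * N₂ n) ≤ C₂ * φsq n := by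
  have hγ0 : 0 < γ := by
    rw [hγ]
    exact div_pos (by linarith [hη.2]) (by linarith [hη.1])
  have hA : 0 < 4 * γ + B := by positivity
  refine ⟨(4 * (4 * γ + B)) ^ ((2 : ℝ) / 3), by positivity, 11 / (12 * (4 * γ + B)),
    by positivity, 3, le_rfl, fun n hn3 => ?_⟩
  have hn : exp 1 ≤ n := by
    have : (3 : ℝ) ≤ n := by exact_mod_cast hn3
    linarith [exp_one_lt_d9]
  have hφn : φsq n = rate γ B n := hφ n
  rw [hN₂, hφn, div_mul_one_add_log_log_div_eq_bandwidth]
  exact ⟨inv_mul_bandwidth_rpow_mul_exp_le_rate_sq hA hn,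
    bandwidth_mul_exp_le_rate hA ((one_lt_exp_iff.mpr one_pos).trans_le hn)⟩
end
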